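/- arXiv:1302.4474 — 2 statements merged into one kernel-verified Lean document; each statement's English description precedes it below -/
import Mathlib

section
/- Let X1, X2, X3 be mutually independent random variables on a common probability space taking values in finite sets, each with entropy H(X1) = H(X2) = H(X3) = a, and let Y, Z be finite-valued random variables with H(Y) ≤ a and H(Z) ≤ a. If H((X1, X2) | (Y, Z)) ≤ ε for some ε ≥ 0, then a − ε ≤ H(X3 | (Y, Z)) ≤ a and H((Y, Z) | X3) ≥ 2a − 2ε. -/
open scoped BigOperators

/-- The probability that the random variable `X` (on finite sample space `Ω`
with probability mass function `μ`) takes the value `a`. -/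
noncomputable def probOf {Ω : Type} [Fintype Ω] {α : Type} [DecidableEq α]
    (μ : Ω → ℝ) (X : Ω → α) (a : α) : ℝ :=
  ∑ ω : Ω, if X ω = a then μ ω else 0

/-- Shannon entropy (natural-log base) of a finite-valued random variable. -/
noncomputable def entropy {Ω : Type} [Fintype Ω] {α : Type} [Fintype α] [DecidableEq α]
    (μ : Ω → ℝ) (X : Ω → α) : ℝ :=
  ∑ a : α, -(probOf μ X a * Real.log (probOf μ X a))

/-- Conditional entropy `H(X | Y) = H(X, Y) - H(Y)`. -/
noncomputable def condEntropy {Ω : Type} [Fintype Ω] {α β : Type}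
    [Fintype α] [DecidableEq α] [Fintype β] [DecidableEq β]
    (μ : Ω → ℝ) (X : Ω → α) (Y : Ω → β) : ℝ :=
  entropy μ (fun ω => (X ω, Y ω)) - entropy μ Y

/-- `μ` is a probability mass function on the finite sample space `Ω`. -/
def IsPMF {Ω : Type} [Fintype Ω] (μ : Ω → ℝ) : Prop :=
  (∀ ω, 0 ≤ μ ω) ∧ ∑ ω : Ω, μ ω = 1

/-- Independence of two finite-valued random variables: the joint distribution
factorizes. -/
def IndepRV {Ω : Type} [Fintype Ω] {α β : Type} [DecidableEq α] [DecidableEq β]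
    (μ : Ω → ℝ) (X : Ω → α) (Y : Ω → β) : Prop :=
  ∀ a b, probOf μ (fun ω => (X ω, Y ω)) (a, b) = probOf μ X a * probOf μ Y b

/-- Mutual independence of three finite-valued random variables: the joint
distribution factorizes. -/
def MutIndep3 {Ω : Type} [Fintype Ω] {α β γ : Type}
    [DecidableEq α] [DecidableEq β] [DecidableEq γ]
    (μ : Ω → ℝ) (X : Ω → α) (Y : Ω → β) (Z : Ω → γ) : Prop :=
  ∀ a b c, probOf μ (fun ω => (X ω, Y ω, Z ω)) (a, b, c) =
    probOf μ X a * probOf μ Y b * probOf μ Z c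

/-!
Every entropy is an expectation over the sample space,
`H(X) = -∑ ω, μ ω * log (P[X = X ω])`, and `P[X = X ω] ≥ μ ω`, so all logarithms are of
positive numbers wherever `μ ω > 0`. Gibbs' inequality in this form gives subadditivity and
submodularity of entropy. With `U = (X1, X2)` and `W = (Y, Z)`, independence gives
`H(U, X3) = 3a`, hence `H(U) ≥ 2a`; then `H(W) ≥ H(U, W) - ε ≥ 2a - ε` while `H(W) ≤ 2a`.
Submodularity gives `H(X3 | W) ≥ H(U, X3) - H(U, W) ≥ 3a - (2a + ε)`, and
`H(W | X3) = H(X3 | W) + H(W) - H(X3)`.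
-/

open Finset Real

section Entropy

variable {Ω : Type} [Fintype Ω] {μ : Ω → ℝ}

lemma probOf_nonneg (hμ : IsPMF μ) {α : Type} [DecidableEq α] (X : Ω → α) (a : α) :
    0 ≤ probOf μ X a :=
  sum_nonneg fun ω _ => by split_ifs <;> simp [hμ.1 ω]

lemma le_probOf_apply_self (hμ : IsPMF μ) {α : Type} [DecidableEq α] (X : Ω → α) (ω : Ω) :
    μ ω ≤ probOf μ X (X ω) := by
  have h := single_le_sum (f := fun ω' => if X ω' = X ω then μ ω' else 0)
    (fun ω' _ => by split_ifs <;> simp [hμ.1 ω']) (mem_univ ω)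
  simpa [probOf] using h

lemma probOf_apply_self_pos (hμ : IsPMF μ) {α : Type} [DecidableEq α] (X : Ω → α) {ω : Ω}
    (hω : 0 < μ ω) : 0 < probOf μ X (X ω) :=
  hω.trans_le (le_probOf_apply_self hμ X ω)

lemma sum_probOf_mul {α : Type} [Fintype α] [DecidableEq α] (X : Ω → α) (F : α → ℝ) :
    ∑ a, probOf μ X a * F a = ∑ ω, μ ω * F (X ω) := by
  simp only [probOf, sum_mul, ite_mul, zero_mul]
  rw [sum_comm]
  simp

lemma sum_probOf (hμ : IsPMF μ) {α : Type} [Fintype α] [DecidableEq α] (X : Ω → α) :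
    ∑ a, probOf μ X a = 1 := by
  simpa [hμ.2] using sum_probOf_mul (μ := μ) X fun _ => 1

lemma sum_probOf_prod_left {α β : Type} [Fintype α] [DecidableEq α] [DecidableEq β]
    (X : Ω → α) (Y : Ω → β) (b : β) :
    ∑ a, probOf μ (fun ω => (X ω, Y ω)) (a, b) = probOf μ Y b := by
  unfold probOf
  rw [sum_comm]
  refine sum_congr rfl fun ω _ => ?_
  by_cases h : Y ω = b <;> simp [Prod.ext_iff, h]

lemma sum_probOf_prod_right {α β : Type} [DecidableEq α] [Fintype β] [DecidableEq β]
    (X : Ω → α) (Y : Ω → β) (a : α) :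
    ∑ b, probOf μ (fun ω => (X ω, Y ω)) (a, b) = probOf μ X a := by
  unfold probOf
  rw [sum_comm]
  refine sum_congr rfl fun ω _ => ?_
  by_cases h : X ω = a <;> simp [Prod.ext_iff, h]

lemma sum_mul_le_sum_mul_of_pos (hμ : IsPMF μ) {f g : Ω → ℝ}
    (h : ∀ ω, 0 < μ ω → f ω ≤ g ω) : ∑ ω, μ ω * f ω ≤ ∑ ω, μ ω * g ω := by
  refine sum_le_sum fun ω _ => ?_
  rcases (hμ.1 ω).eq_or_lt with h0 | hpos
  · simp [← h0]
  · exact mul_le_mul_of_nonneg_left (h ω hpos) hpos.le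

lemma sum_mul_congr_of_pos (hμ : IsPMF μ) {f g : Ω → ℝ}
    (h : ∀ ω, 0 < μ ω → f ω = g ω) : ∑ ω, μ ω * f ω = ∑ ω, μ ω * g ω :=
  (sum_mul_le_sum_mul_of_pos hμ fun ω hω => (h ω hω).le).antisymm
    (sum_mul_le_sum_mul_of_pos hμ fun ω hω => (h ω hω).ge)

lemma entropy_eq_neg_sum_mul_log {α : Type} [Fintype α] [DecidableEq α] (X : Ω → α) :
    entropy μ X = -∑ ω, μ ω * log (probOf μ X (X ω)) := by
  rw [entropy, ← sum_probOf_mul X fun a => log (probOf μ X a), ← sum_neg_distrib]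

/-- Gibbs' inequality. -/
lemma entropy_le_neg_sum_mul_log_of_sum_le_one (hμ : IsPMF μ) {α : Type} [Fintype α]
    [DecidableEq α] (X : Ω → α) (q : α → ℝ) (hq : ∀ a, 0 ≤ q a) (hq1 : ∑ a, q a ≤ 1)
    (hpos : ∀ ω, 0 < μ ω → 0 < q (X ω)) :
    entropy μ X ≤ -∑ ω, μ ω * log (q (X ω)) := by
  set p := probOf μ X with hp_def
  have hratio (a : α) : p a * (q a / p a - 1) ≤ q a - p a := by
    rcases (probOf_nonneg hμ X a).eq_or_lt with h0 | hp
    · simp [p, ← h0, hq a]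
    · rw [mul_sub, mul_div_cancel₀ _ hp.ne', mul_one]
  have key : ∑ ω, μ ω * log (q (X ω)) - ∑ ω, μ ω * log (p (X ω)) ≤ 0 :=
    calc ∑ ω, μ ω * log (q (X ω)) - ∑ ω, μ ω * log (p (X ω))
        = ∑ ω, μ ω * (log (q (X ω)) - log (p (X ω))) := by
          simp only [mul_sub, sum_sub_distrib]
      _ ≤ ∑ ω, μ ω * (q (X ω) / p (X ω) - 1) := by
          refine sum_mul_le_sum_mul_of_pos hμ fun ω hω => ?_
          have hp := probOf_apply_self_pos hμ X hω
          rw [← log_div (hpos ω hω).ne' hp.ne']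
          exact log_le_sub_one_of_pos (div_pos (hpos ω hω) hp)
      _ = ∑ a, p a * (q a / p a - 1) := (sum_probOf_mul X fun a => q a / p a - 1).symm
      _ ≤ ∑ a, (q a - p a) := sum_le_sum fun a _ => hratio a
      _ ≤ 0 := by rw [sum_sub_distrib, hp_def, sum_probOf hμ]; linarith
  rw [entropy_eq_neg_sum_mul_log]
  linarith

lemma probOf_le_probOf_comp (hμ : IsPMF μ) {α α' : Type} [DecidableEq α] [DecidableEq α']
    (X : Ω → α) (g : α → α') (a : α) :
    probOf μ X a ≤ probOf μ (fun ω => g (X ω)) (g a) :=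
  sum_le_sum fun ω _ => by
    by_cases h : X ω = a
    · simp [h]
    · split_ifs <;> simp [hμ.1 ω]

lemma probOf_comp_of_injective {α α' : Type} [DecidableEq α] [DecidableEq α']
    (X : Ω → α) {g : α → α'} (hg : Function.Injective g) (a : α) :
    probOf μ (fun ω => g (X ω)) (g a) = probOf μ X a := by
  simp [probOf, hg.eq_iff]

lemma entropy_comp_le (hμ : IsPMF μ) {α α' : Type} [Fintype α] [DecidableEq α]
    [Fintype α'] [DecidableEq α'] (X : Ω → α) (g : α → α') :
    entropy μ (fun ω => g (X ω)) ≤ entropy μ X := by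
  rw [entropy_eq_neg_sum_mul_log, entropy_eq_neg_sum_mul_log, neg_le_neg_iff]
  exact sum_mul_le_sum_mul_of_pos hμ fun ω hω =>
    log_le_log (probOf_apply_self_pos hμ X hω) (probOf_le_probOf_comp hμ X g (X ω))

lemma entropy_comp_of_injective {α α' : Type} [Fintype α] [DecidableEq α]
    [Fintype α'] [DecidableEq α'] (X : Ω → α) {g : α → α'} (hg : Function.Injective g) :
    entropy μ (fun ω => g (X ω)) = entropy μ X := by
  simp only [entropy_eq_neg_sum_mul_log, probOf_comp_of_injective X hg]

lemma entropy_prod_le (hμ : IsPMF μ) {α β : Type} [Fintype α] [DecidableEq α]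
    [Fintype β] [DecidableEq β] (X : Ω → α) (Y : Ω → β) :
    entropy μ (fun ω => (X ω, Y ω)) ≤ entropy μ X + entropy μ Y := by
  have hq1 : ∑ x : α × β, probOf μ X x.1 * probOf μ Y x.2 = 1 := by
    rw [Fintype.sum_prod_type, ← sum_mul_sum, sum_probOf hμ, sum_probOf hμ, one_mul]
  have hlog : ∀ ω, 0 < μ ω → log (probOf μ X (X ω) * probOf μ Y (Y ω))
      = log (probOf μ X (X ω)) + log (probOf μ Y (Y ω)) := fun ω hω =>
    log_mul (probOf_apply_self_pos hμ X hω).ne' (probOf_apply_self_pos hμ Y hω).ne'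
  calc entropy μ (fun ω => (X ω, Y ω))
      ≤ -∑ ω, μ ω * log (probOf μ X (X ω) * probOf μ Y (Y ω)) :=
        entropy_le_neg_sum_mul_log_of_sum_le_one hμ (fun ω => (X ω, Y ω))
          (fun x => probOf μ X x.1 * probOf μ Y x.2)
          (fun x => mul_nonneg (probOf_nonneg hμ X _) (probOf_nonneg hμ Y _)) hq1.le
          fun ω hω => mul_pos (probOf_apply_self_pos hμ X hω) (probOf_apply_self_pos hμ Y hω)
    _ = entropy μ X + entropy μ Y := by
        rw [sum_mul_congr_of_pos hμ hlog, entropy_eq_neg_sum_mul_log X,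
          entropy_eq_neg_sum_mul_log Y]
        simp only [mul_add, sum_add_distrib]
        ring

lemma entropy_submodular (hμ : IsPMF μ) {α β γ : Type} [Fintype α] [DecidableEq α]
    [Fintype β] [DecidableEq β] [Fintype γ] [DecidableEq γ]
    (A : Ω → α) (B : Ω → β) (C : Ω → γ) :
    entropy μ (fun ω => (A ω, B ω, C ω)) + entropy μ B
      ≤ entropy μ (fun ω => (A ω, B ω)) + entropy μ (fun ω => (B ω, C ω)) := by
  set pAB := probOf μ (fun ω => (A ω, B ω))
  set pBC := probOf μ (fun ω => (B ω, C ω))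
  set pB := probOf μ B
  -- `pAB * pBC / pB` is the law making `A` and `C` conditionally independent given `B`
  have hq1 : ∑ x : α × β × γ, pAB (x.1, x.2.1) * pBC x.2 / pB x.2.1 = 1 := by
    have hfiber (b : β) : ∑ a, ∑ c, pAB (a, b) * pBC (b, c) / pB b = pB b := by
      have hA : ∑ a, pAB (a, b) = pB b := sum_probOf_prod_left A B b
      have hC : ∑ c, pBC (b, c) = pB b := sum_probOf_prod_right B C b
      simp only [mul_div_assoc, ← mul_sum, ← sum_mul, ← sum_div, hA, hC]
      rw [← mul_div_assoc, mul_self_div_self]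
    simp only [Fintype.sum_prod_type]
    rw [sum_comm]
    simp only [hfiber]
    exact sum_probOf hμ B
  have hAB ω (hω : 0 < μ ω) : 0 < pAB (A ω, B ω) :=
    probOf_apply_self_pos hμ (fun ω => (A ω, B ω)) hω
  have hBC ω (hω : 0 < μ ω) : 0 < pBC (B ω, C ω) :=
    probOf_apply_self_pos hμ (fun ω => (B ω, C ω)) hω
  have hB ω (hω : 0 < μ ω) : 0 < pB (B ω) := probOf_apply_self_pos hμ B hω
  have hlog : ∀ ω, 0 < μ ω → log (pAB (A ω, B ω) * pBC (B ω, C ω) / pB (B ω))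
      = log (pAB (A ω, B ω)) + log (pBC (B ω, C ω)) - log (pB (B ω)) := fun ω hω => by
    rw [log_div (mul_pos (hAB ω hω) (hBC ω hω)).ne' (hB ω hω).ne',
      log_mul (hAB ω hω).ne' (hBC ω hω).ne']
  have hGibbs := entropy_le_neg_sum_mul_log_of_sum_le_one hμ (fun ω => (A ω, B ω, C ω))
    (fun x => pAB (x.1, x.2.1) * pBC x.2 / pB x.2.1)
    (fun x => div_nonneg (mul_nonneg (probOf_nonneg hμ _ _) (probOf_nonneg hμ _ _))
      (probOf_nonneg hμ _ _)) hq1.le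
    fun ω hω => div_pos (mul_pos (hAB ω hω) (hBC ω hω)) (hB ω hω)
  rw [sum_mul_congr_of_pos hμ hlog] at hGibbs
  rw [entropy_eq_neg_sum_mul_log (fun ω => (A ω, B ω)), entropy_eq_neg_sum_mul_log B,
    entropy_eq_neg_sum_mul_log (fun ω => (B ω, C ω))]
  simp only [mul_add, mul_sub, sum_add_distrib, sum_sub_distrib] at hGibbs
  linarith

lemma MutIndep3.entropy_eq_add (hμ : IsPMF μ) {α β γ : Type} [Fintype α] [DecidableEq α]
    [Fintype β] [DecidableEq β] [Fintype γ] [DecidableEq γ]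
    {X : Ω → α} {Y : Ω → β} {Z : Ω → γ} (h : MutIndep3 μ X Y Z) :
    entropy μ (fun ω => (X ω, Y ω, Z ω)) = entropy μ X + entropy μ Y + entropy μ Z := by
  have hlog : ∀ ω, 0 < μ ω → log (probOf μ X (X ω) * probOf μ Y (Y ω) * probOf μ Z (Z ω))
      = log (probOf μ X (X ω)) + log (probOf μ Y (Y ω)) + log (probOf μ Z (Z ω)) :=
    fun ω hω => by
      have hX := probOf_apply_self_pos hμ X hω
      have hY := probOf_apply_self_pos hμ Y hω
      have hZ := probOf_apply_self_pos hμ Z hω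
      rw [log_mul (mul_pos hX hY).ne' hZ.ne', log_mul hX.ne' hY.ne']
  rw [entropy_eq_neg_sum_mul_log (fun ω => (X ω, Y ω, Z ω)), entropy_eq_neg_sum_mul_log X,
    entropy_eq_neg_sum_mul_log Y, entropy_eq_neg_sum_mul_log Z]
  simp only [MutIndep3] at h
  simp only [h]
  rw [sum_mul_congr_of_pos hμ hlog]
  simp only [mul_add, sum_add_distrib]
  ring

lemma entropy_le_entropy_prod (hμ : IsPMF μ) {α β : Type} [Fintype α] [DecidableEq α]
    [Fintype β] [DecidableEq β] (X : Ω → α) (Y : Ω → β) :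
    entropy μ X ≤ entropy μ (fun ω => (X ω, Y ω)) :=
  entropy_comp_le hμ (fun ω => (X ω, Y ω)) Prod.fst

lemma entropy_prod_comm {α β : Type} [Fintype α] [DecidableEq α]
    [Fintype β] [DecidableEq β] (X : Ω → α) (Y : Ω → β) :
    entropy μ (fun ω => (Y ω, X ω)) = entropy μ (fun ω => (X ω, Y ω)) :=
  entropy_comp_of_injective (fun ω => (X ω, Y ω)) Prod.swap_injective

lemma condEntropy_le_entropy (hμ : IsPMF μ) {α β : Type} [Fintype α] [DecidableEq α]
    [Fintype β] [DecidableEq β] (X : Ω → α) (Y : Ω → β) :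
    condEntropy μ X Y ≤ entropy μ X := by
  unfold condEntropy
  linarith [entropy_prod_le hμ X Y]

/-- `H(V | W) ≥ H(V | U, W) ≥ H(U, V) - H(U, W)`. -/
lemma entropy_prod_sub_entropy_prod_le_condEntropy (hμ : IsPMF μ) {α β γ : Type}
    [Fintype α] [DecidableEq α] [Fintype β] [DecidableEq β] [Fintype γ] [DecidableEq γ]
    (U : Ω → α) (V : Ω → β) (W : Ω → γ) :
    entropy μ (fun ω => (U ω, V ω)) - entropy μ (fun ω => (U ω, W ω)) ≤ condEntropy μ V W := by
  have hmono : entropy μ (fun ω => (U ω, V ω)) ≤ entropy μ (fun ω => (V ω, W ω, U ω)) :=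
    entropy_comp_le hμ (fun ω => (V ω, W ω, U ω)) fun x => (x.2.2, x.1)
  have := entropy_submodular hμ V W U
  rw [entropy_prod_comm U W] at this
  unfold condEntropy
  linarith

end Entropy

theorem stmt2_general {Ω α₁ α₂ α₃ β γ : Type} [Fintype Ω]
    [Fintype α₁] [DecidableEq α₁] [Fintype α₂] [DecidableEq α₂]
    [Fintype α₃] [DecidableEq α₃] [Fintype β] [DecidableEq β]
    [Fintype γ] [DecidableEq γ]
    (μ : Ω → ℝ) (hμ : IsPMF μ)
    (X1 : Ω → α₁) (X2 : Ω → α₂) (X3 : Ω → α₃) (Y : Ω → β) (Z : Ω → γ)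
    (a ε : ℝ)
    (hindep : MutIndep3 μ X1 X2 X3)
    (hX1 : entropy μ X1 = a) (hX2 : entropy μ X2 = a) (hX3 : entropy μ X3 = a)
    (hY : entropy μ Y ≤ a) (hZ : entropy μ Z ≤ a)
    (hcond : condEntropy μ (fun ω => (X1 ω, X2 ω)) (fun ω => (Y ω, Z ω)) ≤ ε) :
    (a - ε ≤ condEntropy μ X3 (fun ω => (Y ω, Z ω)) ∧
      condEntropy μ X3 (fun ω => (Y ω, Z ω)) ≤ a) ∧
    2 * a - 2 * ε ≤ condEntropy μ (fun ω => (Y ω, Z ω)) X3 := by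
  have hX123 : entropy μ (fun ω => ((X1 ω, X2 ω), X3 ω)) = 3 * a := by
    rw [← entropy_comp_of_injective _ (Equiv.prodAssoc α₁ α₂ α₃).injective]
    simp only [Equiv.prodAssoc_apply]
    rw [hindep.entropy_eq_add hμ, hX1, hX2, hX3]
    ring
  have hYZ := entropy_prod_le hμ Y Z
  have hX12 := entropy_prod_le hμ (fun ω => (X1 ω, X2 ω)) X3
  have hX12YZ := entropy_le_entropy_prod hμ (fun ω => (X1 ω, X2 ω)) (fun ω => (Y ω, Z ω))
  have hlower := entropy_prod_sub_entropy_prod_le_condEntropy hμ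
    (fun ω => (X1 ω, X2 ω)) X3 (fun ω => (Y ω, Z ω))
  have hupper := condEntropy_le_entropy hμ X3 (fun ω => (Y ω, Z ω))
  have hswap := entropy_prod_comm (μ := μ) X3 (fun ω => (Y ω, Z ω))
  simp only [condEntropy] at hcond hlower hupper ⊢
  refine ⟨⟨?_, ?_⟩, ?_⟩ <;> linarith

/-- If `X1, X2, X3` are mutually independent, each with entropy `a`,
`H(Y) ≤ a`, `H(Z) ≤ a` and `H((X1,X2) | (Y,Z)) ≤ ε` with `ε ≥ 0`, then
`a - ε ≤ H(X3 | (Y,Z)) ≤ a` and `H((Y,Z) | X3) ≥ 2a - 2ε`. -/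
theorem stmt2 {Ω α₁ α₂ α₃ β γ : Type} [Fintype Ω]
    [Fintype α₁] [DecidableEq α₁] [Fintype α₂] [DecidableEq α₂]
    [Fintype α₃] [DecidableEq α₃] [Fintype β] [DecidableEq β]
    [Fintype γ] [DecidableEq γ]
    (μ : Ω → ℝ) (hμ : IsPMF μ)
    (X1 : Ω → α₁) (X2 : Ω → α₂) (X3 : Ω → α₃) (Y : Ω → β) (Z : Ω → γ)
    (a ε : ℝ) (hε : 0 ≤ ε)
    (hindep : MutIndep3 μ X1 X2 X3)
    (hX1 : entropy μ X1 = a) (hX2 : entropy μ X2 = a) (hX3 : entropy μ X3 = a)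
    (hY : entropy μ Y ≤ a) (hZ : entropy μ Z ≤ a)
    (hcond : condEntropy μ (fun ω => (X1 ω, X2 ω)) (fun ω => (Y ω, Z ω)) ≤ ε) :
    (a - ε ≤ condEntropy μ X3 (fun ω => (Y ω, Z ω)) ∧
      condEntropy μ X3 (fun ω => (Y ω, Z ω)) ≤ a) ∧
    2 * a - 2 * ε ≤ condEntropy μ (fun ω => (Y ω, Z ω)) X3 :=
  stmt2_general μ hμ X1 X2 X3 Y Z a ε hindep hX1 hX2 hX3 hY hZ hcond
end

section
/- Let G be a finite directed acyclic multigraph, let P be a directed path from s1 to t1 and Q a directed path from s2 to t2, and suppose P and Q share at least one edge. Then the overlap segment of P and Q whose edges occur last along P (i.e., closest to t1 in the order of edges of P) is equal to the overlap segment of P and Q whose edges occur last along Q (i.e., closest to t2 in the order of edges of Q). -/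
/-- A finite directed multigraph: finite vertex and edge sets together with
`tail`/`head` incidence maps. -/
structure Multigraph where
  V : Type
  E : Type
  fintypeV : Fintype V
  fintypeE : Fintype E
  tail : E → V
  head : E → V

namespace Multigraph

/-- Consecutive edges of the list are incident (head of one is tail of the next). -/
def Chain (G : Multigraph) (p : List G.E) : Prop :=
  List.Chain' (fun e f => G.head e = G.tail f) p

/-- `p` is a directed path from `u` to `v`: a nonempty list of consecutively
incident edges starting at `u`, ending at `v`, and visiting no vertex more than
once (the visited vertices are the tails of the edges together with `v`). -/
def IsPath (G : Multigraph) (u v : G.V) (p : List G.E) : Prop :=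
  p ≠ [] ∧ G.Chain p ∧
  p.head?.map G.tail = some u ∧
  p.getLast?.map G.head = some v ∧
  (p.map G.tail ++ [v]).Nodup

/-- `G` is acyclic: no nonempty chain of consecutively incident edges returns to
its starting vertex. -/
def Acyclic (G : Multigraph) : Prop :=
  ∀ p : List G.E, p ≠ [] → G.Chain p →
    p.getLast?.map G.head ≠ p.head?.map G.tail

/-- `e` is an overlap edge for the paths `P` and `Q` if it lies on both. -/
def OverlapEdge (G : Multigraph) (P Q : List G.E) (e : G.E) : Prop :=
  e ∈ P ∧ e ∈ Q

/-- `s` is an overlap segment for the paths `P` and `Q`: it forms a path (from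
some `u` to some `v`), all of its edges are overlap edges for `P` and `Q`, no
incoming edge of its first vertex is an overlap edge, and no outgoing edge of
its last vertex is an overlap edge. -/
def IsOverlapSegment (G : Multigraph) (P Q s : List G.E) : Prop :=
  ∃ u v : G.V, G.IsPath u v s ∧
    (∀ e ∈ s, G.OverlapEdge P Q e) ∧
    (∀ e : G.E, G.head e = u → ¬ G.OverlapEdge P Q e) ∧
    (∀ e : G.E, G.tail e = v → ¬ G.OverlapEdge P Q e)

/-- All edges of `s` occur strictly before all edges of `s'` along the list of
edges `P`. -/
def OccursBefore (G : Multigraph) (P s s' : List G.E) : Prop :=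
  ∀ e ∈ s, ∀ e' ∈ s', ∀ i j : ℕ, P[i]? = some e → P[j]? = some e' → i < j

/-- `S` is the overlap segment of `P` and `Q` whose edges occur last along the
reference path `R` (every other overlap segment occurs strictly before it). -/
def IsLastOverlapSegment (G : Multigraph) (P Q R S : List G.E) : Prop :=
  G.IsOverlapSegment P Q S ∧
  ∀ s : List G.E, G.IsOverlapSegment P Q s → s ≠ S → G.OccursBefore R s S

end Multigraph

/-!
If the two last overlap segments differed, pick an edge `e₁` of the one last along `P` and an
edge `e₂` of the one last along `Q`. Then `e₂` precedes `e₁` on `P` while `e₁` precedes `e₂` on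
`Q`, so `P` walks from the head of `e₂` to the head of `e₁` and `Q` walks back: together they
form a closed walk, which an acyclic graph does not have.
-/

namespace Multigraph

def IsWalk (G : Multigraph) (u v : G.V) (p : List G.E) : Prop :=
  p ≠ [] ∧ G.Chain p ∧ p.head?.map G.tail = some u ∧ p.getLast?.map G.head = some v

variable {G : Multigraph}

theorem IsWalk.append {u v w : G.V} {p q : List G.E} (hp : G.IsWalk u v p)
    (hq : G.IsWalk v w q) : G.IsWalk u w (p ++ q) := by
  obtain ⟨hp0, hpc, hpu, hpv⟩ := hp
  obtain ⟨hq0, hqc, hqv, hqw⟩ := hq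
  obtain ⟨a, ha, hav⟩ := Option.map_eq_some_iff.mp hpv
  obtain ⟨b, hb, hbv⟩ := Option.map_eq_some_iff.mp hqv
  refine ⟨by simp [hp0], ?_, ?_, ?_⟩
  · rw [Chain, List.Chain', List.isChain_append]
    refine ⟨hpc, hqc, fun x hx y hy => ?_⟩
    rw [Option.mem_def, ha] at hx
    rw [Option.mem_def, hb] at hy
    cases hx; cases hy
    exact hav.trans hbv.symm
  · rwa [List.head?_append, Option.or_of_isSome (by simpa using hp0)]
  · rwa [List.getLast?_append_of_ne_nil _ hq0]

theorem Acyclic.not_isWalk_self (hG : G.Acyclic) {u : G.V} {p : List G.E} :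
    ¬ G.IsWalk u u p := by
  rintro ⟨hp0, hpc, hpu, hpv⟩
  exact hG p hp0 hpc (hpv.trans hpu.symm)

theorem Chain.isWalk_drop_take {P : List G.E} (hc : G.Chain P) {i j : ℕ} (hij : i < j)
    (hj : j < P.length) :
    G.IsWalk (G.head (P[i]'(by omega))) (G.head P[j]) ((P.drop (i + 1)).take (j - i)) := by
  have hlen : ((P.drop (i + 1)).take (j - i)).length = j - i := by
    simp only [List.length_take, List.length_drop]; omega
  refine ⟨List.ne_nil_of_length_pos (by omega), (hc.drop (i + 1)).take _, ?_, ?_⟩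
  · rw [List.head?_eq_getElem?, List.getElem?_eq_getElem (by omega), List.getElem_take,
      List.getElem_drop, Option.map_some, List.isChain_iff_getElem.mp hc i (by omega)]
  · rw [List.getLast?_eq_getElem?, hlen, List.getElem?_eq_getElem (by omega), List.getElem_take,
      List.getElem_drop, Option.map_some]
    congr 3; omega

theorem Chain.exists_isWalk_of_occursBefore {R s s' : List G.E} (hc : G.Chain R)
    (hss' : G.OccursBefore R s s') {e e' : G.E} (he : e ∈ s) (he' : e' ∈ s') (heR : e ∈ R)
    (he'R : e' ∈ R) : ∃ w, G.IsWalk (G.head e) (G.head e') w := by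
  obtain ⟨i, hi, rfl⟩ := List.mem_iff_getElem.mp heR
  obtain ⟨j, hj, rfl⟩ := List.mem_iff_getElem.mp he'R
  have hij : i < j := hss' _ he _ he' i j (List.getElem?_eq_getElem hi)
    (List.getElem?_eq_getElem hj)
  exact ⟨_, hc.isWalk_drop_take hij hj⟩

theorem IsOverlapSegment.exists_mem {P Q s : List G.E} (hs : G.IsOverlapSegment P Q s) :
    ∃ e, e ∈ s := by
  obtain ⟨_, _, ⟨hs0, -⟩, -⟩ := hs
  exact List.exists_mem_of_ne_nil s hs0

theorem IsOverlapSegment.overlapEdge {P Q s : List G.E} (hs : G.IsOverlapSegment P Q s)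
    {e : G.E} (he : e ∈ s) : G.OverlapEdge P Q e := by
  obtain ⟨_, _, -, hov, -⟩ := hs
  exact hov e he

end Multigraph

theorem stmt12_general (G : Multigraph) (hG : G.Acyclic)
    (s1 t1 s2 t2 : G.V) (P Q : List G.E)
    (hP : G.IsPath s1 t1 P) (hQ : G.IsPath s2 t2 Q)
    (S1 S2 : List G.E)
    (h1 : G.IsLastOverlapSegment P Q P S1)
    (h2 : G.IsLastOverlapSegment P Q Q S2) :
    S1 = S2 := by
  by_contra hne
  obtain ⟨e1, he1⟩ := h1.1.exists_mem
  obtain ⟨e2, he2⟩ := h2.1.exists_mem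
  obtain ⟨w21, hw21⟩ := hP.2.1.exists_isWalk_of_occursBefore (h1.2 S2 h2.1 (Ne.symm hne)) he2 he1
    (h2.1.overlapEdge he2).1 (h1.1.overlapEdge he1).1
  obtain ⟨w12, hw12⟩ := hQ.2.1.exists_isWalk_of_occursBefore (h2.2 S1 h1.1 hne) he1 he2
    (h1.1.overlapEdge he1).2 (h2.1.overlapEdge he2).2
  exact hG.not_isWalk_self (hw21.append hw12)

/-- In a finite directed acyclic multigraph, if the path `P` from
`s1` to `t1` and the path `Q` from `s2` to `t2` share at least one edge, then
the overlap segment of `P` and `Q` occurring last along `P` coincides with the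
overlap segment of `P` and `Q` occurring last along `Q`. -/
theorem stmt12 (G : Multigraph) (hG : G.Acyclic)
    (s1 t1 s2 t2 : G.V) (P Q : List G.E)
    (hP : G.IsPath s1 t1 P) (hQ : G.IsPath s2 t2 Q)
    (hshare : ∃ e : G.E, e ∈ P ∧ e ∈ Q)
    (S1 S2 : List G.E)
    (h1 : G.IsLastOverlapSegment P Q P S1)
    (h2 : G.IsLastOverlapSegment P Q Q S2) :
    S1 = S2 :=
  stmt12_general G hG s1 t1 s2 t2 P Q hP hQ S1 S2 h1 h2
end
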